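/- Let N users each have a convex operating cost C_i and baseline cost \bar{C}_i. Consider maximizing the Nash product \prod_{i}(\bar{C}_i - C_i(x_i) - \pi_i) over feasible schedules x_i and payments \pi_i satisfying \sum_i \pi_i = 0 and \bar{C}_i - C_i(x_i) - \pi_i \ge 0. Then at any optimal solution, the schedules (x_i) minimize the total cost \sum_i C_i(x_i) over the feasible set, provided there exists a feasible point with \sum_i C_i(x_i) < \sum_i \bar{C}_i. -/

import Mathlib

/-!
The total surplus `∑ Cbar - ∑ C(x)` does not depend on the payments, and among zero-sum payments
the Nash product is largest when the surplus is split equally: by AM-GM every admissible product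
is at most `(total / N) ^ N`, and the equal split attains it. Hence the optimal Nash product is an
increasing function of the total surplus, so an optimal schedule must maximise the total surplus,
i.e. minimise the total cost.
-/

open Finset

lemma Finset.prod_le_mean_pow {ι : Type*} (s : Finset ι) (z : ι → ℝ)
    (hz : ∀ i ∈ s, 0 ≤ z i) :
    ∏ i ∈ s, z i ≤ ((∑ i ∈ s, z i) / #s) ^ #s := by
  rcases s.eq_empty_or_nonempty with rfl | hs
  · simp
  have hcard : (0 : ℝ) < #s := by exact_mod_cast hs.card_pos
  have hprod : 0 ≤ ∏ i ∈ s, z i := prod_nonneg hz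
  have amgm := Real.geom_mean_le_arith_mean s (fun _ ↦ 1) z (fun _ _ ↦ zero_le_one)
    (by simpa using hcard) hz
  simp only [Real.rpow_one, one_mul, sum_const, nsmul_eq_mul, mul_one] at amgm
  calc ∏ i ∈ s, z i = ((∏ i ∈ s, z i) ^ (#s : ℝ)⁻¹) ^ (#s : ℝ) := by
        rw [← Real.rpow_mul hprod, inv_mul_cancel₀ hcard.ne', Real.rpow_one]
    _ ≤ ((∑ i ∈ s, z i) / #s) ^ (#s : ℝ) :=
        Real.rpow_le_rpow (Real.rpow_nonneg hprod _) amgm hcard.le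
    _ = ((∑ i ∈ s, z i) / #s) ^ #s := Real.rpow_natCast _ _

lemma Finset.sum_sub_mean_eq_zero {ι : Type*} (s : Finset ι) (a : ι → ℝ) :
    ∑ i ∈ s, (a i - (∑ j ∈ s, a j) / #s) = 0 := by
  rcases s.eq_empty_or_nonempty with rfl | hs
  · simp
  have hcard : (#s : ℝ) ≠ 0 := by exact_mod_cast hs.card_pos.ne'
  rw [sum_sub_distrib, sum_const, nsmul_eq_mul, mul_div_cancel₀ _ hcard, sub_self]

theorem nash_product_optimum_is_socially_optimal_general
    {ι : Type*} [Fintype ι] [Nonempty ι]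
    {E : Type*}
    (C : ι → E → ℝ) (Cbar : ι → ℝ) (F : Set (ι → E))
    (xs : ι → E) (πs : ι → ℝ)
    (hπ : ∑ i, πs i = 0)
    (hsurplus : ∀ i, 0 ≤ Cbar i - C i (xs i) - πs i)
    (hopt : ∀ x ∈ F, ∀ π : ι → ℝ, ∑ i, π i = 0 →
      (∀ i, 0 ≤ Cbar i - C i (x i) - π i) →
      ∏ i, (Cbar i - C i (x i) - π i) ≤ ∏ i, (Cbar i - C i (xs i) - πs i)) :
    ∀ x ∈ F, ∑ i, C i (xs i) ≤ ∑ i, C i (x i) := by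
  intro x hx
  by_contra! hlt
  set N := Fintype.card ι
  have hN : (0 : ℝ) < N := by exact_mod_cast Fintype.card_pos
  set mean : ℝ := (∑ i, (Cbar i - C i (x i))) / N
  set mean_s : ℝ := (∑ i, (Cbar i - C i (xs i) - πs i)) / N
  have hmean_s_nonneg : 0 ≤ mean_s := div_nonneg (sum_nonneg fun i _ ↦ hsurplus i) hN.le
  have hmean_lt : mean_s < mean := by
    refine (div_lt_div_iff_of_pos_right hN).2 ?_
    simp only [sum_sub_distrib, hπ, sub_zero]
    linarith
  have hsplit : ∀ i, Cbar i - C i (x i) - (Cbar i - C i (x i) - mean) = mean := fun i ↦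
    sub_sub_cancel _ _
  have hequal_split := hopt x hx (fun i ↦ Cbar i - C i (x i) - mean)
    (sum_sub_mean_eq_zero univ _) (fun i ↦ (hsplit i).symm ▸ hmean_s_nonneg.trans hmean_lt.le)
  simp only [hsplit, prod_const, card_univ] at hequal_split
  have hamgm := prod_le_mean_pow univ _ fun i _ ↦ hsurplus i
  rw [card_univ] at hamgm
  exact (pow_lt_pow_left₀ hmean_lt hmean_s_nonneg Fintype.card_ne_zero).not_ge
    (hequal_split.trans hamgm)

/-- At any optimum of the Nash bargaining problem (maximize the
product of surpluses over schedules and zero-sum payments), the schedules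
minimize the total operating cost, provided some feasible point yields a
strictly positive total surplus. -/
theorem nash_product_optimum_is_socially_optimal
    {ι : Type*} [Fintype ι] [Nonempty ι]
    {E : Type*} [NormedAddCommGroup E] [NormedSpace ℝ E]
    (C : ι → E → ℝ) (Cbar : ι → ℝ) (F : Set (ι → E))
    (hF : Convex ℝ F)
    (hconv : ∀ i, ConvexOn ℝ Set.univ (C i))
    (xs : ι → E) (πs : ι → ℝ)
    (hxF : xs ∈ F) (hπ : ∑ i, πs i = 0)
    (hsurplus : ∀ i, 0 ≤ Cbar i - C i (xs i) - πs i)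
    (hopt : ∀ x ∈ F, ∀ π : ι → ℝ, ∑ i, π i = 0 →
      (∀ i, 0 ≤ Cbar i - C i (x i) - π i) →
      ∏ i, (Cbar i - C i (x i) - π i) ≤ ∏ i, (Cbar i - C i (xs i) - πs i))
    (hexists : ∃ x0 ∈ F, ∑ i, C i (x0 i) < ∑ i, Cbar i) :
    ∀ x ∈ F, ∑ i, C i (xs i) ≤ ∑ i, C i (x i) :=
  nash_product_optimum_is_socially_optimal_general C Cbar F xs πs hπ hsurplus hopt
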